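/- arXiv:math/0311498 — 2 statements merged into one kernel-verified Lean document; each statement's English description precedes it below -/
import Mathlib

section
/- For every fixed integer m ≥ 1, as x → ∞, 1/li(x) = (1/x)·(log x − 1 − k_1/log x − k_2/log² x − ... − k_m/log^m x) + O(1/(x·log^{m+1} x)), where the constants k_j are defined by the recurrence k_j + 1!·k_{j-1} + ... + (j-1)!·k_1 = j·j!. -/
/-!
Integrating by parts `n + 1` times gives
`li x = (x / log x) ∑_{i ≤ n} i! / logⁱ x + O(x / log^{n+2} x)`.
Put `u = 1 / log x` and `k₀ = 1`. The recurrence for the `k_j` says that the polynomial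
`(∑_{i ≤ m+1} i! uⁱ) (1 - u ∑_{j ≤ m} k_j uʲ)` is `1` modulo `u^{m+2}`.
Hence `li x` times the proposed approximation `(log x / x) (1 - u ∑_{j ≤ m} k_j uʲ)` of
`1 / li x` is `1 + O(u^{m+2})`. Dividing by `li x ~ x / log x` gives the error term.
-/

open Filter Real

noncomputable def li (x : ℝ) : ℝ := ∫ t in (2:ℝ)..x, 1 / Real.log t

open Asymptotics Finset Polynomial intervalIntegral
open scoped Nat Topology

theorem Polynomial.isBigO_eval_nhds_zero_of_X_pow_dvd {𝕜 : Type*} [NormedField 𝕜] {p : 𝕜[X]}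
    {n : ℕ} (h : X ^ n ∣ p) : (fun u => p.eval u) =O[𝓝 0] fun u => u ^ n := by
  obtain ⟨q, rfl⟩ := h
  simpa using (isBigO_refl (fun u : 𝕜 => u ^ n) _).mul ((q.continuous.tendsto 0).isBigO_one 𝕜)

theorem Polynomial.coeff_sum_range_C_mul_X_pow {R : Type*} [Semiring R] (a : ℕ → R) (n d : ℕ) :
    (∑ i ∈ range n, C (a i) * X ^ i).coeff d = if d < n then a d else 0 := by
  simp

noncomputable def factorialPoly (R : Type*) [Semiring R] (n : ℕ) : R[X] :=
  ∑ i ∈ range n, C (i ! : R) * X ^ i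

theorem X_pow_dvd_factorialPoly_mul_sub_one {R : Type*} [Ring R] {K : ℕ → R}
    (hK : ∀ s, ∑ p ∈ antidiagonal s, (p.1 ! : R) * K p.2 = (s + 1)!) (n : ℕ) :
    X ^ (n + 1) ∣ factorialPoly R (n + 1) * (1 - X * ∑ j ∈ range n, C (K j) * X ^ j) - 1 := by
  rw [X_pow_dvd_iff]
  rintro (_ | s) hs
  · simp [factorialPoly, mul_coeff_zero]
  · rw [mul_sub, mul_one, X_mul, ← mul_assoc, coeff_sub, coeff_sub, coeff_mul_X, coeff_mul,
      coeff_one, factorialPoly, coeff_sum_range_C_mul_X_pow, if_pos hs, ← hK s]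
    have hlow : ∀ p ∈ antidiagonal s, (∑ i ∈ range (n + 1), C (i ! : R) * X ^ i).coeff p.1 *
        (∑ j ∈ range n, C (K j) * X ^ j).coeff p.2 = p.1 ! * K p.2 := by
      intro p hp
      rw [HasAntidiagonal.mem_antidiagonal] at hp
      rw [coeff_sum_range_C_mul_X_pow, coeff_sum_range_C_mul_X_pow, if_pos (by omega),
        if_pos (by omega)]
    rw [sum_congr rfl hlow]
    simp

/-- With `k 0 := 1`, the recurrence becomes the coefficient identity
`(∑ i! Xⁱ) (∑ k_j Xʲ) = ∑ (s + 1)! Xˢ`. -/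
theorem sum_antidiagonal_factorial_mul_update {R : Type*} [CommRing R] {k : ℕ → R}
    (hk : ∀ j : ℕ, 1 ≤ j → ∑ i ∈ range j, (i ! : R) * k (j - i) = j * j !) (s : ℕ) :
    ∑ p ∈ antidiagonal s, (p.1 ! : R) * Function.update k 0 1 p.2 = (s + 1)! := by
  rw [Nat.sum_antidiagonal_eq_sum_range_succ_mk, sum_range_succ]
  rcases Nat.eq_zero_or_pos s with rfl | hs
  · simp
  have hpos : ∀ i ∈ range s, (i ! : R) * Function.update k 0 1 (s - i) = i ! * k (s - i) := by
    intro i hi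
    rw [Function.update_of_ne (by simp at hi; omega)]
  simp only [sum_congr rfl hpos, hk s hs, Nat.sub_self, Function.update_self, Nat.factorial_succ]
  push_cast
  ring

theorem mul_eval_inv_one_sub_X_mul_sum_update {𝕜 : Type*} [Field 𝕜] (k : ℕ → 𝕜) (m : ℕ)
    {L : 𝕜} (hL : L ≠ 0) :
    L * (1 - X * ∑ j ∈ range (m + 1), C (Function.update k 0 1 j) * X ^ j).eval L⁻¹ =
      L - 1 - ∑ j ∈ Icc 1 m, k j / L ^ j := by
  rw [sum_range_succ', ← Ico_add_one_right_eq_Icc, sum_Ico_eq_sum_range]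
  simp only [ne_eq, Nat.add_eq_zero_iff, one_ne_zero, and_false, not_false_eq_true,
    Function.update_of_ne, Function.update_self, map_one, pow_zero, mul_one, eval_sub, eval_one,
    eval_mul, eval_X, eval_add, eval_finsetSum, eval_C, eval_pow, inv_pow, add_tsub_cancel_right,
    add_comm 1]
  field_simp
  ring

theorem intervalIntegrable_one_div_log_pow (n : ℕ) {a b : ℝ} (ha : 1 < a) (hb : 1 < b) :
    IntervalIntegrable (fun t => 1 / log t ^ n) MeasureTheory.volume a b := by
  refine ContinuousOn.intervalIntegrable fun t ht => ContinuousAt.continuousWithinAt ?_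
  have ht : 1 < t := (lt_min ha hb).trans_le ht.1
  have : log t ^ n ≠ 0 := pow_ne_zero _ (log_pos ht).ne'
  have : t ≠ 0 := by positivity
  fun_prop (disch := assumption)

theorem integral_one_div_log_pow_succ (n : ℕ) {a b : ℝ} (ha : 1 < a) (hb : 1 < b) :
    ∫ t in a..b, 1 / log t ^ (n + 1) =
      b / log b ^ (n + 1) - a / log a ^ (n + 1) + (n + 1) * ∫ t in a..b, 1 / log t ^ (n + 2) := by
  have hderiv : ∀ t ∈ Set.uIcc a b, HasDerivAt (fun t => t / log t ^ (n + 1))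
      (1 / log t ^ (n + 1) - (n + 1) * (1 / log t ^ (n + 2))) t := by
    intro t ht
    have ht : 1 < t := (lt_min ha hb).trans_le ht.1
    have hlog : 0 < log t := log_pos ht
    refine ((hasDerivAt_id' t).fun_div ((hasDerivAt_log (zero_lt_one.trans ht).ne').fun_pow
      (n + 1)) (pow_pos hlog _).ne').congr_deriv ?_
    field_simp
    push_cast
    ring
  have hint (k : ℕ) := intervalIntegrable_one_div_log_pow k ha hb
  have hftc := integral_eq_sub_of_hasDerivAt hderiv ((hint _).sub ((hint _).const_mul _))
  rw [integral_sub (hint _) ((hint _).const_mul _), integral_const_mul] at hftc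
  linarith

theorem li_eq_sum_add_integral (n : ℕ) {x : ℝ} (hx : 1 < x) :
    li x = ∑ i ∈ range (n + 1), (i ! : ℝ) * (x / log x ^ (i + 1) - 2 / log 2 ^ (i + 1)) +
      ((n + 1)! : ℝ) * ∫ t in (2:ℝ)..x, 1 / log t ^ (n + 2) := by
  induction n with
  | zero => simpa [li] using integral_one_div_log_pow_succ 0 one_lt_two hx
  | succ n ih =>
    rw [ih, integral_one_div_log_pow_succ (n + 1) one_lt_two hx, sum_range_succ _ (n + 1)]
    push_cast [Nat.factorial_succ]
    ring

theorem integral_one_div_log_pow_le (n : ℕ) {a b : ℝ} (ha : 1 < a) (hab : a ≤ b) :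
    ∫ t in a..b, 1 / log t ^ n ≤ (b - a) / log a ^ n := by
  calc ∫ t in a..b, 1 / log t ^ n
      ≤ ∫ _ in a..b, 1 / log a ^ n :=
        integral_mono_on hab (intervalIntegrable_one_div_log_pow n ha (ha.trans_le hab))
          intervalIntegrable_const fun t ht => by
            have := log_pos ha
            gcongr
            exact ht.1
    _ = (b - a) / log a ^ n := by simp [div_eq_mul_inv]

theorem tendsto_div_log_pow_atTop (n : ℕ) : Tendsto (fun x => x / log x ^ n) atTop atTop := by
  have hpos : ∀ᶠ x in atTop, 0 < log x ^ n / x := by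
    filter_upwards [eventually_gt_atTop 1] with x hx
    have := log_pos hx
    positivity
  have h := tendsto_nhdsWithin_iff.2
    ⟨by simpa using tendsto_pow_log_div_mul_add_atTop 1 0 n one_ne_zero, hpos⟩
  exact (tendsto_inv_nhdsGT_zero.comp h).congr fun x => inv_div _ _

/-- Split the integral at `√x`: the integrand is at most `1 / log 2 ^ n` before it and at most
`2 ^ n / log x ^ n` after it. -/
theorem integral_one_div_log_pow_isBigO (n : ℕ) :
    (fun x => ∫ t in (2:ℝ)..x, 1 / log t ^ n) =O[atTop] fun x => x / log x ^ n := by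
  have hsqrt : ∀ᶠ x in atTop, log x ^ n ≤ √x := by
    filter_upwards [(isLittleO_log_rpow_rpow_atTop n one_half_pos).bound one_pos,
      eventually_ge_atTop 1] with x hx hx1
    have := log_nonneg hx1
    rwa [rpow_natCast, ← sqrt_eq_rpow, one_mul, norm_of_nonneg (by positivity),
      norm_of_nonneg (sqrt_nonneg x)] at hx
  refine IsBigO.of_bound (1 / log 2 ^ n + 2 ^ n) ?_
  filter_upwards [hsqrt, eventually_ge_atTop 4] with x hx hx4
  have hx0 : 0 < x := by linarith
  have hL : 0 < log x := log_pos (by linarith)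
  have h2s : 2 ≤ √x := le_sqrt_of_sq_le (by linarith)
  have hsx : √x ≤ x := (sqrt_le_left hx0.le).mpr (by nlinarith)
  have hs : √x ≤ x / log x ^ n := by
    rw [le_div_iff₀ (by positivity)]
    calc √x * log x ^ n ≤ √x * √x := by gcongr
      _ = x := mul_self_sqrt hx0.le
  have hint (a b : ℝ) (ha : 1 < a) (hb : 1 < b) := intervalIntegrable_one_div_log_pow n ha hb
  have hnonneg : 0 ≤ ∫ t in (2:ℝ)..x, 1 / log t ^ n :=
    integral_nonneg (by linarith) fun t ht => by
      have := log_pos (by linarith [ht.1] : 1 < t)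
      positivity
  rw [norm_of_nonneg hnonneg, norm_of_nonneg (by positivity),
    ← integral_add_adjacent_intervals (hint 2 √x one_lt_two (by linarith))
    (hint √x x (by linarith) (by linarith))]
  have h1 := integral_one_div_log_pow_le n one_lt_two h2s
  have h2 := integral_one_div_log_pow_le n (by linarith) hsx
  rw [log_sqrt hx0.le, div_pow, div_div_eq_mul_div] at h2
  calc _ ≤ (√x - 2) / log 2 ^ n + (x - √x) * 2 ^ n / log x ^ n := add_le_add h1 h2
    _ ≤ 1 / log 2 ^ n * (x / log x ^ n) + 2 ^ n * (x / log x ^ n) := by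
      rw [mul_comm, mul_div_assoc, one_div_mul_eq_div]
      gcongr <;> linarith
    _ = _ := by ring

theorem li_sub_factorialPoly_isBigO (n : ℕ) :
    (fun x => li x - x / log x * (factorialPoly ℝ (n + 1)).eval (log x)⁻¹) =O[atTop]
      fun x => x / log x ^ (n + 2) := by
  have hconst : (fun _ => ∑ i ∈ range (n + 1), (i ! : ℝ) * (2 / log 2 ^ (i + 1))) =o[atTop]
      fun x => x / log x ^ (n + 2) :=
    isLittleO_const_left.2 (Or.inr (tendsto_norm_atTop_atTop.comp (tendsto_div_log_pow_atTop _)))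
  refine (((integral_one_div_log_pow_isBigO (n + 2)).const_mul_left ((n + 1)! : ℝ)).sub
    hconst.isBigO).congr' ?_ EventuallyEq.rfl
  filter_upwards [eventually_gt_atTop 1] with x hx
  rw [li_eq_sum_add_integral n hx]
  simp only [factorialPoly, eval_finsetSum, eval_mul, eval_C, eval_pow, eval_X, mul_sum]
  rw [sum_congr rfl fun i _ => (by ring : x / log x * (i ! * (log x)⁻¹ ^ i) =
    i ! * (x / log x ^ (i + 1) - 2 / log 2 ^ (i + 1)) + i ! * (2 / log 2 ^ (i + 1))),
    sum_add_distrib]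
  ring

theorem li_isEquivalent : li ~[atTop] fun x => x / log x := by
  have hsmall : (fun x => x / log x ^ 2) =o[atTop] fun x => x / log x := by
    simpa [div_eq_mul_inv, mul_assoc, ← sq] using
      (isBigO_refl (fun x => x / log x) atTop).mul_isLittleO
        (isLittleO_one_iff ℝ |>.2 tendsto_log_atTop.inv_tendsto_atTop)
  refine ((li_sub_factorialPoly_isBigO 0).trans_isLittleO hsmall).congr_left fun x => ?_
  simp [factorialPoly]

theorem tendsto_li_atTop : Tendsto li atTop atTop :=
  li_isEquivalent.symm.tendsto_atTop (by simpa using tendsto_div_log_pow_atTop 1)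

theorem isBigO_one_div_sub_of_isBigO_one_sub_mul {α 𝕜 : Type*} [NormedField 𝕜] {l : Filter α}
    {F H G W : α → 𝕜} (hF : ∀ᶠ x in l, F x ≠ 0) (hG : (fun x => 1 / F x) =O[l] G)
    (hW : (fun x => 1 - F x * H x) =O[l] W) : (fun x => 1 / F x - H x) =O[l] fun x => W x * G x :=
  (hW.mul hG).congr' (hF.mono fun x hx => by field_simp) EventuallyEq.rfl

theorem one_sub_li_mul_isBigO {Q : ℝ[X]} {n : ℕ}
    (hQ : X ^ (n + 2) ∣ factorialPoly ℝ (n + 2) * Q - 1) :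
    (fun x => 1 - li x * (log x / x * Q.eval (log x)⁻¹)) =O[atTop]
      fun x => 1 / log x ^ (n + 2) := by
  have hu : Tendsto (fun x => (log x)⁻¹) atTop (𝓝 0) := tendsto_log_atTop.inv_tendsto_atTop
  have hPQ := (isBigO_eval_nhds_zero_of_X_pow_dvd hQ).comp_tendsto hu
  have hR := (li_sub_factorialPoly_isBigO (n + 1)).mul <|
    (isBigO_refl (fun x => log x / x) atTop).mul (((Q.continuous.tendsto 0).comp hu).isBigO_one ℝ)
  have hx : ∀ᶠ x in atTop, x ≠ 0 ∧ log x ≠ 0 := by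
    filter_upwards [eventually_gt_atTop 1] with x hx using ⟨by positivity, (log_pos hx).ne'⟩
  -- `1 - li·(log x / x)·Q = -(P Q - 1) - (li - (x / log x) P)·(log x / x)·Q`, with `P = factorialPoly`
  refine (hPQ.neg_left.sub (hR.trans_eventuallyEq ?_)).congr' ?_ (.of_forall fun x => by simp)
  · filter_upwards [hx] with x ⟨hx, hL⟩
    simp only [mul_one, Function.comp_apply, inv_pow]
    field_simp
    ring
  · filter_upwards [hx] with x ⟨hx, hL⟩
    simp only [eval_sub, eval_mul, eval_one, Function.comp_apply, neg_sub]
    field_simp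
    ring

theorem one_div_li_asymptotic_general (k : ℕ → ℝ)
    (hk : ∀ j : ℕ, 1 ≤ j →
      ∑ i ∈ Finset.range j, (Nat.factorial i : ℝ) * k (j - i) =
        j * Nat.factorial j)
    (m : ℕ) :
    (fun x : ℝ => 1 / li x -
        (1 / x) * (Real.log x - 1 -
          ∑ j ∈ Finset.Icc 1 m, k j / (Real.log x) ^ j))
      =O[atTop] (fun x : ℝ => 1 / (x * (Real.log x) ^ (m + 1))) := by
  set Q : ℝ[X] := 1 - X * ∑ j ∈ range (m + 1), C (Function.update k 0 1 j) * X ^ j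
  have hQ : X ^ (m + 2) ∣ factorialPoly ℝ (m + 2) * Q - 1 :=
    X_pow_dvd_factorialPoly_mul_sub_one (sum_antidiagonal_factorial_mul_update hk) (m + 1)
  have hx : ∀ᶠ x in atTop, x ≠ 0 ∧ log x ≠ 0 := by
    filter_upwards [eventually_gt_atTop 1] with x hx using ⟨by positivity, (log_pos hx).ne'⟩
  have happrox : ∀ᶠ x in atTop, log x / x * Q.eval (log x)⁻¹ =
      1 / x * (log x - 1 - ∑ j ∈ Icc 1 m, k j / log x ^ j) := by
    filter_upwards [hx] with x ⟨_, hL⟩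
    rw [← mul_eval_inv_one_sub_X_mul_sum_update k m hL]
    ring
  have hinv : (fun x => 1 / li x) =O[atTop] fun x => log x / x :=
    li_isEquivalent.inv.isBigO.congr (fun x => (one_div _).symm) fun x => inv_div _ _
  have hdefect : (fun x => 1 - li x * (1 / x * (log x - 1 - ∑ j ∈ Icc 1 m, k j / log x ^ j)))
      =O[atTop] fun x => 1 / log x ^ (m + 2) :=
    (one_sub_li_mul_isBigO hQ).congr' (happrox.mono fun x hx => by simp only [hx]) .rfl
  refine (isBigO_one_div_sub_of_isBigO_one_sub_mul (tendsto_li_atTop.eventually_ne_atTop 0) hinv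
    hdefect).trans_eventuallyEq ?_
  filter_upwards [hx] with x ⟨hx, hL⟩
  field_simp
  ring

theorem one_div_li_asymptotic (k : ℕ → ℝ)
    (hk : ∀ j : ℕ, 1 ≤ j →
      ∑ i ∈ Finset.range j, (Nat.factorial i : ℝ) * k (j - i) =
        j * Nat.factorial j)
    (m : ℕ) (hm : 1 ≤ m) :
    (fun x : ℝ => 1 / li x -
        (1 / x) * (Real.log x - 1 -
          ∑ j ∈ Finset.Icc 1 m, k j / (Real.log x) ^ j))
      =O[atTop] (fun x : ℝ => 1 / (x * (Real.log x) ^ (m + 1))) :=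
  one_div_li_asymptotic_general k hk m
end

section
/- Assume the prime number theorem in the form π(x) = li(x) + R(x) with R(x) ≪ x·exp(−C·δ(x)) where δ(x) = (log x)^{3/5}·(log log x)^{−1/5} and C > 0. Then the series ∑_{n=3}^∞ R(n)/(li(n)·(li(n)+R(n))) converges absolutely, and its tail satisfies ∑_{n > x} R(n)/(li(n)·(li(n)+R(n))) ≪ exp(−(C/3)·δ(x)) as x → ∞. -/
open Filter Real

noncomputable def primePi (x : ℝ) : ℝ := Nat.primeCounting ⌊x⌋₊

noncomputable def R (x : ℝ) : ℝ := primePi x - li x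

noncomputable def pntDelta (x : ℝ) : ℝ :=
  (Real.log x) ^ ((3:ℝ)/5) * (Real.log (Real.log x)) ^ (-(1:ℝ)/5)

/-!
Since `log log x = o(δ(x))`, the factor `exp (-c δ(x))` beats every power of `log x`.
In particular `|R x| ≤ x / (4 log x)` eventually, so `li x · π(x) ≫ x² / log² x` and the term
at `n` is `≪ e^{-Cδ(n)} log² n / n ≤ e^{-(C/3)δ(n)} / (n log² n)`, using
`e^{-(2C/3)δ(n)} ≤ log⁻⁴ n`. As `δ` is eventually increasing and `∑ 1 / (n log² n)` converges
(it telescopes against `1 / log n`), the tail beyond `x` is `≪ e^{-(C/3)δ(x)}`.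
-/

open Asymptotics Topology

lemma summable_sub_succ_of_antitone {f : ℕ → ℝ} (hf : Antitone f) (h0 : ∀ n, 0 ≤ f n) :
    Summable fun n => f n - f (n + 1) :=
  summable_of_sum_range_le (c := f 0) (fun n => sub_nonneg.2 (hf n.le_succ))
    fun N => by rw [Finset.sum_range_sub']; linarith [h0 N]

lemma inv_mul_log_sq_le_four_mul_inv_log_sub {x : ℝ} (hx : 2 ≤ x) :
    (x * log x ^ 2)⁻¹ ≤ 4 * ((log x)⁻¹ - (log (x + 1))⁻¹) := by
  have hL : 0 < log x := log_pos (by linarith)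
  have hL1 : 0 < log (x + 1) := log_pos (by linarith)
  have hgap : (2 * x)⁻¹ ≤ log (x + 1) - log x := by
    have h := log_le_sub_one_of_pos (show 0 < x / (x + 1) by positivity)
    rw [log_div (by linarith) (by linarith)] at h
    have : (2 * x)⁻¹ ≤ 1 - x / (x + 1) := by
      rw [← sub_nonneg]; field_simp; nlinarith
    linarith
  have hsq : log (x + 1) ≤ 2 * log x := by
    have h := log_le_log (by linarith) (show x + 1 ≤ x ^ 2 by nlinarith)
    rwa [log_pow, Nat.cast_ofNat] at h
  calc (x * log x ^ 2)⁻¹ = 4 * ((2 * x)⁻¹ / (2 * log x * log x)) := by field_simp; ring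
    _ ≤ 4 * ((log (x + 1) - log x) / (log x * log (x + 1))) := by
        refine mul_le_mul_of_nonneg_left (div_le_div₀ ?_ hgap ?_ ?_) (by norm_num)
        exacts [le_trans (by positivity) hgap, by positivity, by nlinarith]
    _ = 4 * ((log x)⁻¹ - (log (x + 1))⁻¹) := by field_simp

lemma summable_inv_nat_mul_log_sq : Summable fun n : ℕ => ((n : ℝ) * log n ^ 2)⁻¹ := by
  refine (summable_nat_add_iff 2).1 ?_
  have hanti : Antitone fun n : ℕ => (log ((n + 2 : ℕ) : ℝ))⁻¹ := fun m n hmn => by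
    have : (2 : ℝ) ≤ ((m + 2 : ℕ) : ℝ) := by exact_mod_cast Nat.le_add_left 2 m
    exact inv_anti₀ (log_pos (by linarith)) (log_le_log (by linarith) (by gcongr))
  refine Summable.of_nonneg_of_le (fun n => by positivity) (fun n => ?_)
    ((summable_sub_succ_of_antitone hanti fun n => by positivity).mul_left 4)
  have h := inv_mul_log_sq_le_four_mul_inv_log_sub (x := ((n + 2 : ℕ) : ℝ)) (by norm_num)
  push_cast at h ⊢
  rwa [show (n : ℝ) + 2 + 1 = n + 1 + 2 by ring] at h

lemma li_ge_sub_two_div_log {x : ℝ} (hx : 2 ≤ x) : (x - 2) / log x ≤ li x := by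
  have hpos : ∀ t ∈ Set.Icc 2 x, 0 < log t := fun t ht => log_pos (by linarith [ht.1])
  have hint : IntervalIntegrable (fun t => 1 / log t) MeasureTheory.volume 2 x := by
    refine ContinuousOn.intervalIntegrable ?_
    rw [Set.uIcc_of_le hx]
    exact continuousOn_const.div (continuousOn_log.mono fun t ht =>
      Set.mem_compl_singleton_iff.2 (zero_lt_two.trans_le ht.1).ne') fun t ht => (hpos t ht).ne'
  calc (x - 2) / log x = ∫ _ in (2 : ℝ)..x, 1 / log x := by simp [div_eq_mul_inv]
    _ ≤ li x := intervalIntegral.integral_mono_on hx intervalIntegrable_const hint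
        fun t ht => one_div_le_one_div_of_le (hpos t ht) (log_le_log (by linarith [ht.1]) ht.2)

lemma abs_div_mul_add_le {x L l r : ℝ} (hx : 0 < x) (hL : 0 < L) (hl : x / (2 * L) ≤ l)
    (hr : |r| ≤ x / (4 * L)) : |r / (l * (l + r))| ≤ 8 * L ^ 2 * |r| / x ^ 2 := by
  have hlr : x / (4 * L) ≤ l + r := by
    have : x / (2 * L) - x / (4 * L) = x / (4 * L) := by field_simp; ring
    linarith [neg_abs_le r]
  have hprod : x ^ 2 / (8 * L ^ 2) ≤ l * (l + r) :=
    calc x ^ 2 / (8 * L ^ 2) = x / (2 * L) * (x / (4 * L)) := by field_simp; ring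
      _ ≤ l * (l + r) := mul_le_mul hl hlr (by positivity) (le_trans (by positivity) hl)
  rw [abs_div, abs_of_pos (lt_of_lt_of_le (by positivity) hprod)]
  calc |r| / (l * (l + r)) ≤ |r| / (x ^ 2 / (8 * L ^ 2)) :=
        div_le_div_of_nonneg_left (abs_nonneg r) (by positivity) hprod
    _ = 8 * L ^ 2 * |r| / x ^ 2 := by field_simp

lemma isLittleO_log_log_pntDelta : (fun x => log (log x)) =o[atTop] pntDelta := by
  have h : log =o[atTop] fun u => u ^ ((3 : ℝ) / 5) * log u ^ (-(1 : ℝ) / 5) := by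
    refine ((isLittleO_log_rpow_rpow_atTop ((6 : ℝ) / 5) (by norm_num : (0 : ℝ) < 3 / 5))
      |>.mul_isBigO (isBigO_refl (fun u => log u ^ (-(1 : ℝ) / 5)) atTop)).congr' ?_
      EventuallyEq.rfl
    filter_upwards [eventually_gt_atTop 1] with u hu
    rw [← rpow_add (log_pos hu)]
    norm_num
  exact h.comp_tendsto tendsto_log_atTop

lemma pntDelta_nonneg {x : ℝ} (hx : 1 ≤ log x) : 0 ≤ pntDelta x :=
  mul_nonneg (rpow_nonneg (by linarith) _) (rpow_nonneg (log_nonneg hx) _)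

lemma tendsto_pntDelta_atTop : Tendsto pntDelta atTop atTop := by
  refine tendsto_atTop_mono' atTop ?_ (tendsto_log_atTop.comp tendsto_log_atTop)
  filter_upwards [isLittleO_log_log_pntDelta.bound one_pos,
    tendsto_log_atTop.eventually_ge_atTop 1] with x hx hlog
  rw [one_mul, norm_eq_abs, norm_of_nonneg (pntDelta_nonneg hlog)] at hx
  exact (le_abs_self _).trans hx

lemma tendsto_log_pow_mul_exp_neg_pntDelta (k : ℕ) {c : ℝ} (hc : 0 < c) :
    Tendsto (fun x => log x ^ k * exp (-c * pntDelta x)) atTop (𝓝 0) := by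
  have hequiv : (fun x => k * log (log x) + -c * pntDelta x) ~[atTop] fun x => -c * pntDelta x :=
    ((isLittleO_log_log_pntDelta.const_mul_left (k : ℝ)).const_mul_right
      (neg_ne_zero.2 hc.ne')).add_isEquivalent IsEquivalent.refl
  have hbot := hequiv.symm.tendsto_atBot
    (tendsto_pntDelta_atTop.const_mul_atTop_of_neg (neg_neg_of_pos hc))
  refine (tendsto_exp_atBot.comp hbot).congr' ?_
  filter_upwards [tendsto_log_atTop.eventually_gt_atTop 0] with x hx
  rw [Function.comp_apply, exp_add, exp_nat_mul, exp_log hx]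

lemma pntDelta_eq_exp {x : ℝ} (hx : 1 < log x) :
    pntDelta x = exp (3 / 5 * log (log x) - 1 / 5 * log (log (log x))) := by
  rw [pntDelta, rpow_def_of_pos (by linarith), rpow_def_of_pos (log_pos hx), ← exp_add]
  ring_nf

lemma log_sub_log_le_sub {a b : ℝ} (ha : 1 ≤ a) (hab : a ≤ b) : log b - log a ≤ b - a := by
  have h := log_le_sub_one_of_pos (div_pos (by linarith) (by linarith : 0 < a))
  rw [log_div (by linarith) (by linarith)] at h
  have : b / a - 1 ≤ b - a := by
    rw [div_sub_one (by linarith), div_le_iff₀ (by linarith)]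
    nlinarith
  linarith

lemma monotoneOn_pntDelta : MonotoneOn pntDelta (Set.Ici (exp (exp 1))) := by
  have hlog : ∀ z ∈ Set.Ici (exp (exp 1)), exp 1 ≤ log z := fun z hz => by
    simpa using log_le_log (exp_pos _) hz
  have hloglog : ∀ z ∈ Set.Ici (exp (exp 1)), 1 ≤ log (log z) := fun z hz => by
    simpa using log_le_log (exp_pos 1) (hlog z hz)
  intro x hx y hy hxy
  have hmono : log (log x) ≤ log (log y) :=
    log_le_log ((exp_pos 1).trans_le (hlog x hx)) (log_le_log ((exp_pos _).trans_le hx) hxy)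
  have hgap := log_sub_log_le_sub (hloglog x hx) hmono
  have hone : 1 < exp 1 := one_lt_exp_iff.2 one_pos
  rw [pntDelta_eq_exp (hone.trans_le (hlog x hx)), pntDelta_eq_exp (hone.trans_le (hlog y hy)),
    exp_le_exp]
  linarith

lemma isBigO_tsum_of_norm_le {α E : Type*} [NormedAddCommGroup E] {l : Filter α}
    {f : α → ℕ → E} {g : α → ℝ} {b : ℕ → ℝ} (hb : Summable b)
    (h : ∀ᶠ x in l, ∀ n, ‖f x n‖ ≤ g x * b n) : (fun x => ∑' n, f x n) =O[l] g := by
  refine IsBigO.of_bound ‖∑' n, b n‖ ?_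
  filter_upwards [h] with x hx
  calc ‖∑' n, f x n‖ ≤ g x * ∑' n, b n :=
        tsum_of_norm_bounded (hb.hasSum.mul_left (g x)) hx
    _ ≤ ‖∑' n, b n‖ * ‖g x‖ := by
        rw [mul_comm, ← norm_mul]
        exact le_norm_self _

lemma eventually_abs_R_div_li_mul_le {C : ℝ} (hC : 0 < C)
    (hR : R =O[atTop] fun x => x * exp (-C * pntDelta x)) :
    ∃ M, 0 ≤ M ∧ ∀ᶠ x in atTop,
      |R x / (li x * (li x + R x))| ≤
        exp (-(C / 3) * pntDelta x) * (M * (x * log x ^ 2)⁻¹) := by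
  obtain ⟨K, hK, hRK⟩ := hR.exists_pos
  refine ⟨8 * K, by positivity, ?_⟩
  filter_upwards [hRK.bound, eventually_ge_atTop 4,
    (tendsto_log_pow_mul_exp_neg_pntDelta 1 hC).eventually_lt_const
      (by positivity : 0 < (4 * K)⁻¹),
    (tendsto_log_pow_mul_exp_neg_pntDelta 4 (by positivity : 0 < 2 * C / 3)).eventually_lt_const
      one_pos] with x hRx hx hlog_mul_exp hlog_pow_mul_exp
  set L := log x
  set E₁ := exp (-(C / 3) * pntDelta x)
  set E₂ := exp (-(2 * C / 3) * pntDelta x)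
  have hL : 0 < L := log_pos (by linarith)
  have hsplit : exp (-C * pntDelta x) = E₁ * E₂ := by rw [← exp_add]; ring_nf
  have hRx' : |R x| ≤ K * x * (E₁ * E₂) := by
    rwa [norm_eq_abs, norm_mul, norm_of_nonneg (by linarith), norm_of_nonneg (exp_pos _).le,
      hsplit, ← mul_assoc] at hRx
  have hR4 : |R x| ≤ x / (4 * L) := by
    rw [pow_one, hsplit] at hlog_mul_exp
    calc |R x| ≤ K * x * (E₁ * E₂) := hRx'
      _ = 4 * K * (L * (E₁ * E₂)) * (x / (4 * L)) := by field_simp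
      _ ≤ 4 * K * (4 * K)⁻¹ * (x / (4 * L)) := by gcongr
      _ = x / (4 * L) := by field_simp
  have hli : x / (2 * L) ≤ li x := by
    refine le_trans ?_ (li_ge_sub_two_div_log (by linarith))
    rw [div_le_div_iff₀ (by positivity) hL]
    nlinarith
  calc |R x / (li x * (li x + R x))| ≤ 8 * L ^ 2 * |R x| / x ^ 2 :=
        abs_div_mul_add_le (by linarith) hL hli hR4
    _ ≤ 8 * L ^ 2 * (K * x * (E₁ * E₂)) / x ^ 2 := by gcongr
    _ = E₁ * (8 * K * (x * L ^ 2)⁻¹) * (L ^ 4 * E₂) := by field_simp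
    _ ≤ E₁ * (8 * K * (x * L ^ 2)⁻¹) * 1 := by gcongr
    _ = _ := mul_one _

lemma exists_abs_R_div_li_mul_le_of_lt {C : ℝ} (hC : 0 < C)
    (hR : R =O[atTop] fun x => x * exp (-C * pntDelta x)) :
    ∃ M, 0 ≤ M ∧ ∀ᶠ x : ℝ in atTop, ∀ n : ℕ, x < n →
      |R n / (li n * (li n + R n))| ≤
        exp (-(C / 3) * pntDelta x) * (M * (n * log n ^ 2)⁻¹) := by
  obtain ⟨M, hM, hbound⟩ := eventually_abs_R_div_li_mul_le hC hR
  obtain ⟨x₀, hx₀⟩ := eventually_atTop.1 hbound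
  refine ⟨M, hM, ?_⟩
  filter_upwards [eventually_ge_atTop x₀, eventually_ge_atTop (exp (exp 1))] with x hx hxe n hn
  refine (hx₀ n (by linarith)).trans (mul_le_mul_of_nonneg_right ?_ (by positivity))
  rw [exp_le_exp, neg_mul, neg_mul, neg_le_neg_iff]
  exact mul_le_mul_of_nonneg_left (monotoneOn_pntDelta hxe (Set.mem_Ici.2 (by linarith)) hn.le)
    (by positivity)

theorem tail_estimate (C : ℝ) (hC : 0 < C)
    (hR : R =O[atTop] (fun x : ℝ => x * Real.exp (-C * pntDelta x))) :
    Summable (fun n : ℕ => |R (n + 3) / (li (n + 3) * (li (n + 3) + R (n + 3)))|) ∧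
    (fun x : ℝ => ∑' n : ℕ,
        (if 3 ≤ n ∧ x < (n : ℝ) then
          R n / (li n * (li n + R n)) else 0))
      =O[atTop] (fun x : ℝ => Real.exp (-(C / 3) * pntDelta x)) := by
  obtain ⟨M, hM, hbound⟩ := exists_abs_R_div_li_mul_le_of_lt hC hR
  have hmajorant := summable_inv_nat_mul_log_sq.mul_left M
  constructor
  · obtain ⟨x, hx⟩ := hbound.exists
    have hsum := (hmajorant.mul_left (exp (-(C / 3) * pntDelta x))).of_norm_bounded_eventually_nat
      (f := fun n : ℕ => |R n / (li n * (li n + R n))|) <| by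
        filter_upwards [tendsto_natCast_atTop_atTop.eventually_gt_atTop x] with n hn
        rw [norm_abs_eq_norm, norm_eq_abs]
        exact hx n hn
    simpa only [Nat.cast_add, Nat.cast_ofNat] using (summable_nat_add_iff 3).2 hsum
  · refine isBigO_tsum_of_norm_le hmajorant ?_
    filter_upwards [hbound] with x hx n
    split_ifs with h
    · exact hx n h.2
    · rw [norm_zero]
      exact mul_nonneg (exp_pos _).le (mul_nonneg hM (by positivity))
end
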